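/- arXiv:0906.1257 — 3 statements merged into one kernel-verified Lean document; each statement's English description precedes it below -/
import Mathlib

section
/- Let N(n) denote the number of closed orbits γ of σ on Σ_A^+ with least period |γ| ≤ n. Then, with h₀ = log(κ₀ − 1), one has N(n) ~ (e^{h₀}/(e^{h₀} − 1))·e^{h₀ n}/n as n → ∞; that is, lim_{n→∞} n·e^{−h₀ n}·N(n) = e^{h₀}/(e^{h₀} − 1). -/
/-!
A point of period `m` of the shift is a cyclic word of length `m` with no two cyclically adjacent
letters equal. Cutting a cyclic word of length `m + 1` open and dropping its last letter leaves a
path of length `m` whose ends differ, and paths with equal ends are the cyclic words of length `m`;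
so `P(m+1) + P(m) = κ₀ L^m` with `L = κ₀ - 1`, hence `P(m) = L^m + L (-1)^m`. A point of period
`d` that is not of least period `d` has least period at most `d / 2`, so only `O(d L^(d/2))` of
them exist and `M(d)`, the number of points of least period `d`, is `L^d (1 + o(1))`.

A closed orbit of least period `d` consists of exactly `d` such points, so
`N(n) = ∑_{d ≤ n} M(d) / d`. Substituting `k = n - d`,
`n L^(-n) N(n) = ∑_{k < n} n / (n - k) · (M(n-k) / L^(n-k)) · L^(-k)`, which tends to
`∑_k L^(-k) = L / (L - 1)` by dominated convergence against `(k + 1) L^(-k)`.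
-/

/-- The one-sided shift space `Σ_A^+` of admissible sequences over `κ₀` symbols. -/
abbrev SigmaPlus (κ₀ : ℕ) : Type := {ξ : ℕ → Fin κ₀ // ∀ j : ℕ, ξ j ≠ ξ (j + 1)}

/-- The shift map `σ` on `Σ_A^+`, `(σ ξ) j = ξ (j+1)`. -/
def shift (κ₀ : ℕ) : SigmaPlus κ₀ → SigmaPlus κ₀ :=
  fun ξ => ⟨fun j => ξ.1 (j + 1), fun j => ξ.2 (j + 1)⟩

/-- `N n` is the number of closed orbits `γ` of the shift `σ` on `Σ_A^+`
with least period `|γ| ≤ n`: an orbit is the set `{σ^[j] ξ : j ∈ ℕ}` of a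
periodic point `ξ`, and its least period is `Function.minimalPeriod (shift κ₀) ξ`. -/
noncomputable def closedOrbitCount (κ₀ : ℕ) (n : ℕ) : ℕ :=
  {O : Set (SigmaPlus κ₀) | ∃ ξ : SigmaPlus κ₀,
    1 ≤ Function.minimalPeriod (shift κ₀) ξ ∧
    Function.minimalPeriod (shift κ₀) ξ ≤ n ∧
    O = {η : SigmaPlus κ₀ | ∃ j : ℕ, (shift κ₀)^[j] ξ = η}}.ncard

open Filter Topology Function Set

theorem natCast_div_natCast_sub_le (n k : ℕ) : (n : ℝ) / (n - k : ℕ) ≤ k + 1 := by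
  rcases le_or_gt n k with h | h
  · rw [Nat.sub_eq_zero_of_le h, Nat.cast_zero, div_zero]; positivity
  rw [div_le_iff₀ (by exact_mod_cast Nat.sub_pos_of_lt h), Nat.cast_sub h.le]
  have : (k : ℝ) + 1 ≤ n := by exact_mod_cast h
  nlinarith

theorem summable_succ_mul_geometric {r : ℝ} (hr0 : 0 ≤ r) (hr : r < 1) :
    Summable fun k : ℕ => ((k : ℝ) + 1) * r ^ k := by
  have h := (summable_pow_mul_geometric_of_norm_lt_one 1 (by rwa [Real.norm_of_nonneg hr0])).add
    (summable_geometric_of_lt_one hr0 hr)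
  simpa [add_mul] using h

theorem tendsto_sum_range_div_sub_mul_geometric {r : ℝ} (hr0 : 0 ≤ r) (hr : r < 1) {u : ℕ → ℝ}
    (hu : Tendsto u atTop (𝓝 1)) :
    Tendsto (fun n => ∑ k ∈ Finset.range n, (n : ℝ) / (n - k : ℕ) * u (n - k) * r ^ k) atTop
      (𝓝 (1 - r)⁻¹) := by
  -- `F n k = 0` for `k ≥ n`, since then `n - k = 0` and division by zero gives `0`.
  set F : ℕ → ℕ → ℝ := fun n k => (n : ℝ) / (n - k : ℕ) * u (n - k) * r ^ k
  obtain ⟨C, hC⟩ := hu.abs.bddAbove_range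
  have hlim : ∀ k, Tendsto (fun n => F n k) atTop (𝓝 (r ^ k)) := by
    intro k
    refine (tendsto_add_atTop_iff_nat k).1 ?_
    have hratio : Tendsto (fun m : ℕ => ((m + k : ℕ) : ℝ) / m) atTop (𝓝 1) := by
      simpa [inv_div] using (tendsto_natCast_div_add_atTop (k : ℝ)).inv₀ one_ne_zero
    simpa [F] using (hratio.mul hu).mul_const (r ^ k)
  have hbound : ∀ n k, ‖F n k‖ ≤ C * (((k : ℝ) + 1) * r ^ k) := by
    intro n k
    calc ‖F n k‖ = (n : ℝ) / (n - k : ℕ) * |u (n - k)| * r ^ k := by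
          simp [F, abs_of_nonneg hr0]
      _ ≤ (k + 1) * C * r ^ k := by
          gcongr
          · exact natCast_div_natCast_sub_le n k
          · exact hC ⟨n - k, rfl⟩
      _ = C * (((k : ℝ) + 1) * r ^ k) := by ring
  have hdom := tendsto_tsum_of_dominated_convergence
    ((summable_succ_mul_geometric hr0 hr).mul_left C) hlim (Eventually.of_forall hbound)
  rw [tsum_geometric_of_lt_one hr0 hr] at hdom
  refine hdom.congr fun n => tsum_eq_sum fun k hk => ?_
  rw [Finset.mem_range, not_lt] at hk
  simp [Nat.sub_eq_zero_of_le hk]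

theorem mul_inv_pow_mul_sum_Icc_eq {L : ℝ} (hL : L ≠ 0) (b : ℕ → ℝ) (n : ℕ) :
    n * (L ^ n)⁻¹ * ∑ d ∈ Finset.Icc 1 n, b d =
      ∑ k ∈ Finset.range n, (n : ℝ) / (n - k : ℕ) * ((n - k : ℕ) * (L ^ (n - k))⁻¹ * b (n - k)) *
        L⁻¹ ^ k := by
  rw [Finset.mul_sum]
  refine Finset.sum_nbij' (fun d => n - d) (fun k => n - k) ?_ ?_ ?_ ?_ ?_
  · intro d hd; simp only [Finset.mem_Icc, Finset.mem_range] at hd ⊢; omega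
  · intro k hk; simp only [Finset.mem_Icc, Finset.mem_range] at hk ⊢; omega
  · intro d hd; simp only [Finset.mem_Icc] at hd; omega
  · intro k hk; simp only [Finset.mem_range] at hk; omega
  · intro d hd
    simp only [Finset.mem_Icc] at hd
    rw [Nat.sub_sub_self hd.2]
    have hd0 : (d : ℝ) ≠ 0 := by exact_mod_cast (by omega : d ≠ 0)
    have hpow : L ^ n = L ^ d * L ^ (n - d) := by rw [← pow_add, Nat.add_sub_cancel' hd.2]
    rw [hpow, inv_pow]
    field_simp

theorem tendsto_mul_inv_pow_mul_sum_Icc {L : ℝ} (hL : 1 < L) {b : ℕ → ℝ}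
    (hb : Tendsto (fun d => d * (L ^ d)⁻¹ * b d) atTop (𝓝 1)) :
    Tendsto (fun n => n * (L ^ n)⁻¹ * ∑ d ∈ Finset.Icc 1 n, b d) atTop (𝓝 (L / (L - 1))) := by
  have hlim : (1 - L⁻¹)⁻¹ = L / (L - 1) := by field_simp
  simp_rw [mul_inv_pow_mul_sum_Icc_eq (zero_lt_one.trans hL).ne', ← hlim]
  exact tendsto_sum_range_div_sub_mul_geometric (by positivity) (inv_lt_one_of_one_lt₀ hL) hb

theorem tendsto_mul_pow_div_two_div_pow {L : ℝ} (hL : 1 < L) :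
    Tendsto (fun d : ℕ => d * L ^ (d / 2) / L ^ d) atTop (𝓝 0) := by
  set r := Real.sqrt L
  have hr : 1 < r := Real.lt_sqrt_of_sq_lt (by simpa using hL)
  have hrL : r ^ 2 = L := Real.sq_sqrt (zero_lt_one.trans hL).le
  refine squeeze_zero (fun d => by positivity) (fun d => ?_)
    (tendsto_self_mul_const_pow_of_lt_one (inv_nonneg.2 (by positivity)) (inv_lt_one_of_one_lt₀ hr))
  have h1 : L ^ (d / 2) ≤ r ^ d := by
    rw [← hrL, ← pow_mul]; exact pow_le_pow_right₀ hr.le (Nat.mul_div_le d 2)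
  have h2 : L ^ d = r ^ d * r ^ d := by rw [← hrL, ← pow_mul, ← pow_add]; ring_nf
  have : 0 < r ^ d := by positivity
  calc d * L ^ (d / 2) / L ^ d ≤ d * r ^ d / (r ^ d * r ^ d) := by rw [h2]; gcongr
    _ = d * r⁻¹ ^ d := by rw [inv_pow]; field_simp

theorem Finset.card_image_eq_sum_inv_card_fiber {α β K : Type*} [DecidableEq β]
    [DivisionSemiring K] [CharZero K] (s : Finset α) (g : α → β) :
    ((s.image g).card : K) = ∑ x ∈ s, ((s.filter fun y => g y = g x).card : K)⁻¹ := by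
  rw [card_eq_sum_ones, Nat.cast_sum, Nat.cast_one]
  refine sum_image' _ fun x hx => ?_
  have hx' : x ∈ s.filter fun y => g y = g x := mem_filter.2 ⟨hx, rfl⟩
  rw [sum_congr rfl fun y hy => by rw [(mem_filter.1 hy).2], sum_const, nsmul_eq_mul,
    mul_inv_cancel₀ (Nat.cast_ne_zero.2 (card_ne_zero_of_mem hx'))]

namespace Function

variable {α : Type*} {f : α → α} {x y : α}

theorem range_iterate_apply_iterate (hx : x ∈ periodicPts f) (j : ℕ) :
    range (fun k => f^[k] (f^[j] x)) = range (fun k => f^[k] x) := by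
  obtain ⟨n, hn, hxn⟩ := mem_periodicPts.1 hx
  ext y
  rw [mem_range, mem_range, ← mem_periodicOrbit_iff hx, ← periodicOrbit_apply_iterate_eq hx j,
    mem_periodicOrbit_iff (mk_mem_periodicPts hn (hxn.apply_iterate j))]

theorem range_iterate_eq_iff (hx : x ∈ periodicPts f) :
    range (fun k => f^[k] y) = range (fun k => f^[k] x) ↔ y ∈ range (fun k => f^[k] x) :=
  ⟨fun h => h ▸ ⟨0, rfl⟩, fun ⟨j, hj⟩ => hj ▸ range_iterate_apply_iterate hx j⟩

theorem ncard_range_iterate (hx : x ∈ periodicPts f) :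
    (range fun k => f^[k] x).ncard = minimalPeriod f x := by
  have hpos := minimalPeriod_pos_of_mem_periodicPts hx
  have : (range fun k => f^[k] x) = (fun k => f^[k] x) '' Iio (minimalPeriod f x) := by
    refine (image_subset_range _ _).antisymm' ?_
    rintro _ ⟨k, rfl⟩
    exact ⟨k % minimalPeriod f x, Nat.mod_lt k hpos, iterate_mod_minimalPeriod_eq⟩
  rw [this, iterate_injOn_Iio_minimalPeriod.ncard_image, ncard_Iio_nat]

theorem ncard_image_range_iterate (n : ℕ)
    (hfin : {x | 1 ≤ minimalPeriod f x ∧ minimalPeriod f x ≤ n}.Finite) :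
    (((fun x => range fun k => f^[k] x) ''
        {x | 1 ≤ minimalPeriod f x ∧ minimalPeriod f x ≤ n}).ncard : ℝ) =
      ∑ d ∈ Finset.Icc 1 n, ({x | minimalPeriod f x = d}.ncard : ℝ) / d := by
  classical
  set s := hfin.toFinset
  have hmem : ∀ {x}, x ∈ s ↔ minimalPeriod f x ∈ Finset.Icc 1 n := by
    intro x; simp [s]
  have hper : ∀ {x}, x ∈ s → x ∈ periodicPts f := fun hx =>
    minimalPeriod_pos_iff_mem_periodicPts.1 (Finset.mem_Icc.1 (hmem.1 hx)).1
  have hfiber : ∀ x ∈ s, (s.filter fun y => (range fun k => f^[k] y) = range fun k => f^[k] x).card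
      = minimalPeriod f x := by
    intro x hx
    rw [← ncard_range_iterate (hper hx), ← ncard_coe_finset]
    congr 1
    ext y
    simp only [Finset.coe_filter, mem_ofPred_eq]
    refine ⟨fun ⟨hy, h⟩ => (range_iterate_eq_iff (hper hx)).1 h, fun hy => ?_⟩
    obtain ⟨j, rfl⟩ := hy
    refine ⟨?_, range_iterate_apply_iterate (hper hx) j⟩
    rwa [hmem, minimalPeriod_apply_iterate (hper hx), ← hmem]
  rw [← hfin.coe_toFinset, ← Finset.coe_image, ncard_coe_finset,
    Finset.card_image_eq_sum_inv_card_fiber, Finset.sum_congr rfl fun x hx => by rw [hfiber x hx],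
    ← Finset.sum_fiberwise_of_maps_to fun x hx => hmem.1 hx]
  refine Finset.sum_congr rfl fun d hd => ?_
  rw [Finset.sum_congr rfl fun x hx => by rw [(Finset.mem_filter.1 hx).2], Finset.sum_const,
    nsmul_eq_mul, div_eq_mul_inv, ← ncard_coe_finset]
  congr 3
  ext x
  simp only [Finset.coe_filter, mem_ofPred_eq, hmem]
  exact ⟨And.right, fun h => ⟨h ▸ hd, h⟩⟩

theorem setOf_minimalPeriod_eq_subset_ptsOfPeriod (d : ℕ) :
    {x | minimalPeriod f x = d} ⊆ ptsOfPeriod f d :=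
  fun x (hx : minimalPeriod f x = d) => hx ▸ isPeriodicPt_minimalPeriod f x

theorem minimalPeriod_le_half {d : ℕ} (hd : 0 < d) (hx : IsPeriodicPt f d x)
    (hne : minimalPeriod f x ≠ d) : minimalPeriod f x ≤ d / 2 := by
  obtain ⟨k, hk⟩ := hx.minimalPeriod_dvd
  have hk2 : 2 ≤ k := by
    rcases k with _ | _ | k
    · omega
    · exact absurd hk.symm (by simpa using hne)
    · omega
  rw [Nat.le_div_iff_mul_le two_pos, hk]
  exact Nat.mul_le_mul_left _ hk2

theorem ncard_ptsOfPeriod_le_add_sum (hfin : ∀ e, 0 < e → (ptsOfPeriod f e).Finite) {d : ℕ}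
    (hd : 0 < d) :
    (ptsOfPeriod f d).ncard ≤
      {x | minimalPeriod f x = d}.ncard + ∑ e ∈ Finset.Icc 1 (d / 2), (ptsOfPeriod f e).ncard := by
  set M := {x | minimalPeriod f x = d}
  have hsub : ptsOfPeriod f d \ M ⊆ ⋃ e ∈ Finset.Icc 1 (d / 2), ptsOfPeriod f e :=
    fun x ⟨hx, hne⟩ => mem_biUnion
      (Finset.mem_Icc.2 ⟨hx.minimalPeriod_pos hd, minimalPeriod_le_half hd hx hne⟩)
      (isPeriodicPt_minimalPeriod f x)
  have hUfin : (⋃ e ∈ Finset.Icc 1 (d / 2), ptsOfPeriod f e).Finite :=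
    (Finset.finite_toSet _).biUnion fun e he => hfin e (Finset.mem_Icc.1 he).1
  calc (ptsOfPeriod f d).ncard ≤ (ptsOfPeriod f d \ M).ncard + M.ncard :=
        ncard_le_ncard_sdiff_add_ncard _ _
          ((hfin d hd).subset (setOf_minimalPeriod_eq_subset_ptsOfPeriod d))
    _ ≤ (⋃ e ∈ Finset.Icc 1 (d / 2), ptsOfPeriod f e).ncard + M.ncard :=
        Nat.add_le_add_right (ncard_le_ncard hsub hUfin) _
    _ ≤ _ := by rw [add_comm]; gcongr; exact Finset.set_ncard_biUnion_le _ _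

theorem Periodic.apply_ne_apply_succ {e : ℕ → α} {m : ℕ} (he : Periodic e m) (hm : 0 < m)
    (h : ∀ i < m, e i ≠ e (i + 1)) (j : ℕ) : e j ≠ e (j + 1) := by
  have hsucc : e (j + 1) = e (j % m + 1) := by
    rw [← he.map_mod_nat (j + 1), ← Nat.mod_add_mod, he.map_mod_nat]
  rw [hsucc, ← he.map_mod_nat j]
  exact h _ (Nat.mod_lt j hm)

end Function

section AdmissibleWord

variable {α : Type*}

-- Indexed by the number `m` of steps: such a word has the `m + 1` letters `w 0, …, w m`.
abbrev AdmissibleWord (α : Type*) (m : ℕ) : Type _ :=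
  {w : Fin (m + 1) → α // ∀ i : Fin m, w i.castSucc ≠ w i.succ}

-- Cyclic words of length `m`, written with their first letter repeated at the end.
abbrev ClosedAdmissibleWord (α : Type*) (m : ℕ) : Type _ :=
  {w : AdmissibleWord α m // w.1 (Fin.last m) = w.1 0}

namespace AdmissibleWord

def snoc {m : ℕ} (w : AdmissibleWord α m) (a : α) (ha : a ≠ w.1 (Fin.last m)) :
    AdmissibleWord α (m + 1) :=
  ⟨Fin.snoc w.1 a, fun i => by
    induction i using Fin.lastCases with
    | last => simpa [Fin.succ_last] using ha.symm
    | cast i => rw [Fin.succ_castSucc, Fin.snoc_castSucc, Fin.snoc_castSucc]; exact w.2 i⟩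

def init {m : ℕ} (w : AdmissibleWord α (m + 1)) : AdmissibleWord α m :=
  ⟨Fin.init w.1, fun i => by simpa only [Fin.init, Fin.succ_castSucc] using w.2 i.castSucc⟩

theorem init_last_ne {m : ℕ} (w : AdmissibleWord α (m + 1)) :
    (init w).1 (Fin.last m) ≠ w.1 (Fin.last (m + 1)) := by
  simpa only [init, Fin.init, Fin.succ_last] using w.2 (Fin.last m)

def snocEquiv (m : ℕ) :
    (Σ w : AdmissibleWord α m, {a : α // a ≠ w.1 (Fin.last m)}) ≃ AdmissibleWord α (m + 1) where
  toFun p := snoc p.1 p.2.1 p.2.2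
  invFun w := ⟨init w, w.1 (Fin.last (m + 1)), (init_last_ne w).symm⟩
  left_inv _ := Sigma.subtype_ext (Subtype.ext (Fin.init_snoc (α := fun _ => α) _ _))
    (Fin.snoc_last (α := fun _ => α) _ _)
  right_inv w := Subtype.ext (Fin.snoc_init_self w.1)

end AdmissibleWord

namespace ClosedAdmissibleWord

def initEquiv (m : ℕ) :
    ClosedAdmissibleWord α (m + 1) ≃ {w : AdmissibleWord α m // w.1 (Fin.last m) ≠ w.1 0} where
  toFun w := ⟨AdmissibleWord.init w.1, w.2 ▸ AdmissibleWord.init_last_ne w.1⟩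
  invFun w := ⟨AdmissibleWord.snoc w.1 (w.1.1 0) w.2.symm, by simp [AdmissibleWord.snoc]⟩
  left_inv w := by
    refine Subtype.ext (Subtype.ext ?_)
    conv_rhs => rw [← Fin.snoc_init_self w.1.1]
    simp [AdmissibleWord.init, AdmissibleWord.snoc, Fin.init, w.2]
  right_inv w := Subtype.ext (Subtype.ext (Fin.init_snoc (α := fun _ => α) _ _))

variable {m : ℕ} [NeZero m] (w : ClosedAdmissibleWord α m)

def extend (j : ℕ) : α :=
  w.1.1 ⟨j % m, (Nat.mod_lt j (NeZero.pos m)).trans (Nat.lt_succ_self m)⟩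

theorem extend_periodic : Periodic (extend w) m := fun j => by simp [extend]

theorem extend_of_le {i : ℕ} (hi : i ≤ m) : extend w i = w.1.1 ⟨i, Nat.lt_succ_of_le hi⟩ := by
  rcases hi.lt_or_eq with hi | rfl
  · simp [extend, Nat.mod_eq_of_lt hi]
  · simp only [extend, Nat.mod_self]
    exact w.2.symm

theorem extend_ne_succ (j : ℕ) : extend w j ≠ extend w (j + 1) :=
  (extend_periodic w).apply_ne_apply_succ (NeZero.pos m) (fun i hi => by
    rw [extend_of_le w hi.le, extend_of_le w hi]
    exact w.1.2 ⟨i, hi⟩) j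

end ClosedAdmissibleWord

variable [Fintype α] [DecidableEq α]

theorem card_admissibleWord (m : ℕ) :
    Fintype.card (AdmissibleWord α m) = Fintype.card α * (Fintype.card α - 1) ^ m := by
  induction m with
  | zero =>
    simpa using Fintype.card_congr
      ((Equiv.subtypeUnivEquiv fun w i => i.elim0).trans (Equiv.funUnique (Fin 1) α))
  | succ m ih =>
    rw [← Fintype.card_congr (AdmissibleWord.snocEquiv m), Fintype.card_sigma]
    simp [Fintype.card_subtype_compl, ih, pow_succ, mul_assoc]

theorem card_closedAdmissibleWord_succ_add (m : ℕ) :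
    Fintype.card (ClosedAdmissibleWord α (m + 1)) + Fintype.card (ClosedAdmissibleWord α m) =
      Fintype.card (AdmissibleWord α m) := by
  rw [Fintype.card_congr (ClosedAdmissibleWord.initEquiv m), Fintype.card_subtype_compl,
    Nat.sub_add_cancel (Fintype.card_subtype_le _)]

theorem card_closedAdmissibleWord (m : ℕ) :
    (Fintype.card (ClosedAdmissibleWord α m) : ℝ) =
      ((Fintype.card α : ℝ) - 1) ^ m + ((Fintype.card α : ℝ) - 1) * (-1) ^ m := by
  cases isEmpty_or_nonempty α
  · simp
  induction m with
  | zero => simp [Fintype.card_subtype]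
  | succ m ih =>
    have h := congrArg (Nat.cast : ℕ → ℝ) (card_closedAdmissibleWord_succ_add (α := α) m)
    push_cast [card_admissibleWord, Nat.cast_sub Fintype.card_pos] at h
    rw [eq_sub_of_add_eq h, ih]
    ring

end AdmissibleWord

section Shift

variable {κ₀ : ℕ}

theorem shift_iterate_apply (m : ℕ) (ξ : SigmaPlus κ₀) (j : ℕ) :
    ((shift κ₀)^[m] ξ).1 j = ξ.1 (j + m) := by
  induction m generalizing ξ with
  | zero => rfl
  | succ m ih => rw [iterate_succ_apply, ih]; rfl

theorem isPeriodicPt_shift_iff {m : ℕ} {ξ : SigmaPlus κ₀} :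
    IsPeriodicPt (shift κ₀) m ξ ↔ Periodic ξ.1 m := by
  simp only [IsPeriodicPt, IsFixedPt, Subtype.ext_iff, funext_iff, shift_iterate_apply, Periodic]

def ptsOfPeriodShiftEquiv (m : ℕ) [NeZero m] :
    ptsOfPeriod (shift κ₀) m ≃ ClosedAdmissibleWord (Fin κ₀) m where
  toFun ξ := ⟨⟨fun i => ξ.1.1 i, fun i => ξ.1.2 i⟩, by simpa using isPeriodicPt_shift_iff.1 ξ.2 0⟩
  invFun w := ⟨⟨ClosedAdmissibleWord.extend w, ClosedAdmissibleWord.extend_ne_succ w⟩,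
    isPeriodicPt_shift_iff.2 (ClosedAdmissibleWord.extend_periodic w)⟩
  left_inv ξ := Subtype.ext (Subtype.ext (funext (isPeriodicPt_shift_iff.1 ξ.2).map_mod_nat))
  right_inv w :=
    Subtype.ext (Subtype.ext (funext fun i => ClosedAdmissibleWord.extend_of_le w i.is_le))

theorem finite_ptsOfPeriod_shift {m : ℕ} (hm : 0 < m) : (ptsOfPeriod (shift κ₀) m).Finite := by
  have : NeZero m := ⟨hm.ne'⟩
  exact Set.finite_coe_iff.1 (Finite.of_equiv _ (ptsOfPeriodShiftEquiv m).symm)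

theorem ncard_ptsOfPeriod_shift {m : ℕ} (hm : 0 < m) :
    ((ptsOfPeriod (shift κ₀) m).ncard : ℝ) = ((κ₀ : ℝ) - 1) ^ m + ((κ₀ : ℝ) - 1) * (-1) ^ m := by
  have : NeZero m := ⟨hm.ne'⟩
  rw [← Nat.card_coe_set_eq, Nat.card_congr (ptsOfPeriodShiftEquiv m), Nat.card_eq_fintype_card,
    card_closedAdmissibleWord, Fintype.card_fin]

theorem ncard_ptsOfPeriod_shift_le (hκ : 2 ≤ κ₀) {m : ℕ} (hm : 0 < m) :
    ((ptsOfPeriod (shift κ₀) m).ncard : ℝ) ≤ 2 * ((κ₀ : ℝ) - 1) ^ m := by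
  have hL : 1 ≤ (κ₀ : ℝ) - 1 := by rw [le_sub_iff_add_le]; exact_mod_cast hκ
  have hLm : (κ₀ : ℝ) - 1 ≤ ((κ₀ : ℝ) - 1) ^ m := le_self_pow₀ hL hm.ne'
  have hsign : ((κ₀ : ℝ) - 1) * (-1) ^ m ≤ (κ₀ : ℝ) - 1 := by
    rcases neg_one_pow_eq_or ℝ m with h | h <;> rw [h] <;> linarith
  rw [ncard_ptsOfPeriod_shift hm]
  linarith

theorem tendsto_ncard_ptsOfPeriod_shift_div (hκ : 3 ≤ κ₀) :
    Tendsto (fun m => ((ptsOfPeriod (shift κ₀) m).ncard : ℝ) / ((κ₀ : ℝ) - 1) ^ m) atTop (𝓝 1) := by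
  have hL : 1 < (κ₀ : ℝ) - 1 := by rw [lt_sub_iff_add_lt]; exact_mod_cast hκ
  have hgeom : Tendsto (fun m => (-((κ₀ : ℝ) - 1)⁻¹) ^ m) atTop (𝓝 0) :=
    tendsto_pow_atTop_nhds_zero_of_abs_lt_one
      (by rw [abs_neg, abs_inv, abs_of_pos (zero_lt_one.trans hL)]; exact inv_lt_one_of_one_lt₀ hL)
  have hlim := (hgeom.const_mul ((κ₀ : ℝ) - 1)).const_add 1
  rw [mul_zero, add_zero] at hlim
  refine hlim.congr' ?_
  filter_upwards [eventually_gt_atTop 0] with m hm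
  rw [ncard_ptsOfPeriod_shift hm, neg_eq_neg_one_mul, mul_pow, inv_pow]
  field_simp

theorem ncard_ptsOfPeriod_shift_le_add (hκ : 2 ≤ κ₀) {d : ℕ} (hd : 0 < d) :
    ((ptsOfPeriod (shift κ₀) d).ncard : ℝ) ≤
      {ξ | minimalPeriod (shift κ₀) ξ = d}.ncard + 2 * (d * ((κ₀ : ℝ) - 1) ^ (d / 2)) := by
  have hL : 1 ≤ (κ₀ : ℝ) - 1 := by rw [le_sub_iff_add_le]; exact_mod_cast hκ
  have hsum : ∑ e ∈ Finset.Icc 1 (d / 2), ((ptsOfPeriod (shift κ₀) e).ncard : ℝ) ≤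
      2 * (d * ((κ₀ : ℝ) - 1) ^ (d / 2)) := by
    calc ∑ e ∈ Finset.Icc 1 (d / 2), ((ptsOfPeriod (shift κ₀) e).ncard : ℝ)
        ≤ ∑ _e ∈ Finset.Icc 1 (d / 2), 2 * ((κ₀ : ℝ) - 1) ^ (d / 2) := by
          refine Finset.sum_le_sum fun e he => ?_
          obtain ⟨he1, he2⟩ := Finset.mem_Icc.1 he
          exact (ncard_ptsOfPeriod_shift_le hκ he1).trans (by gcongr)
      _ ≤ 2 * (d * ((κ₀ : ℝ) - 1) ^ (d / 2)) := by
          rw [Finset.sum_const, nsmul_eq_mul, Nat.card_Icc, Nat.add_sub_cancel, mul_left_comm]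
          gcongr
          exact_mod_cast Nat.div_le_self d 2
  have h := ncard_ptsOfPeriod_le_add_sum (fun e he => finite_ptsOfPeriod_shift (κ₀ := κ₀) he) hd
  have hcast : ((ptsOfPeriod (shift κ₀) d).ncard : ℝ) ≤ {ξ | minimalPeriod (shift κ₀) ξ = d}.ncard +
      ∑ e ∈ Finset.Icc 1 (d / 2), ((ptsOfPeriod (shift κ₀) e).ncard : ℝ) := by
    exact_mod_cast h
  linarith

theorem tendsto_ncard_minimalPeriod_shift_div (hκ : 3 ≤ κ₀) :
    Tendsto (fun d => ({ξ | minimalPeriod (shift κ₀) ξ = d}.ncard : ℝ) / ((κ₀ : ℝ) - 1) ^ d)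
      atTop (𝓝 1) := by
  have hL : 1 < (κ₀ : ℝ) - 1 := by rw [lt_sub_iff_add_lt]; exact_mod_cast hκ
  have hP := tendsto_ncard_ptsOfPeriod_shift_div hκ
  have hlower := hP.sub ((tendsto_mul_pow_div_two_div_pow hL).const_mul 2)
  rw [mul_zero, sub_zero] at hlower
  refine tendsto_of_tendsto_of_tendsto_of_le_of_le' hlower hP ?_ ?_
  all_goals filter_upwards [eventually_gt_atTop 0] with d hd
  · rw [← mul_div_assoc, ← sub_div]
    gcongr
    linarith [ncard_ptsOfPeriod_shift_le_add (κ₀ := κ₀) (by omega) hd]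
  · refine div_le_div_of_nonneg_right ?_ (by positivity)
    exact_mod_cast ncard_le_ncard (setOf_minimalPeriod_eq_subset_ptsOfPeriod d)
      (finite_ptsOfPeriod_shift hd)

theorem closedOrbitCount_eq_sum (n : ℕ) :
    (closedOrbitCount κ₀ n : ℝ) =
      ∑ d ∈ Finset.Icc 1 n, ({ξ | minimalPeriod (shift κ₀) ξ = d}.ncard : ℝ) / d := by
  have hfin : {ξ | 1 ≤ minimalPeriod (shift κ₀) ξ ∧ minimalPeriod (shift κ₀) ξ ≤ n}.Finite :=
    ((Finset.finite_toSet (Finset.Icc 1 n)).biUnion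
      fun d hd => finite_ptsOfPeriod_shift (Finset.mem_Icc.1 hd).1).subset
      fun ξ hξ => mem_biUnion (Finset.mem_Icc.2 hξ) (isPeriodicPt_minimalPeriod _ ξ)
  rw [← ncard_image_range_iterate n hfin, closedOrbitCount]
  congr 2
  ext O
  exact ⟨fun ⟨ξ, h1, h2, hO⟩ => ⟨ξ, ⟨h1, h2⟩, hO.symm⟩, fun ⟨ξ, hξ, hO⟩ => ⟨ξ, hξ.1, hξ.2, hO.symm⟩⟩

end Shift

/-- With `h₀ = log (κ₀ - 1)`, the number `N n` of closed orbits of least period at most `n`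
satisfies `N n ~ (e^{h₀}/(e^{h₀} - 1)) · e^{h₀ n}/n` as `n → ∞`, i.e.
`n · e^{-h₀ n} · N n → e^{h₀}/(e^{h₀} - 1)`. -/
theorem closed_orbit_asymptotics (κ₀ : ℕ) (hκ : 3 ≤ κ₀) :
    Filter.Tendsto
      (fun n : ℕ => (n : ℝ) * Real.exp (-(Real.log ((κ₀ : ℝ) - 1)) * n) *
        (closedOrbitCount κ₀ n : ℝ))
      Filter.atTop
      (nhds (Real.exp (Real.log ((κ₀ : ℝ) - 1)) /
        (Real.exp (Real.log ((κ₀ : ℝ) - 1)) - 1))) := by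
  have hL : 1 < (κ₀ : ℝ) - 1 := by rw [lt_sub_iff_add_lt]; exact_mod_cast hκ
  have hexp (n : ℕ) : Real.exp (-Real.log ((κ₀ : ℝ) - 1) * n) = (((κ₀ : ℝ) - 1) ^ n)⁻¹ := by
    rw [neg_mul, Real.exp_neg, mul_comm, Real.exp_nat_mul, Real.exp_log (zero_lt_one.trans hL)]
  simp_rw [hexp, Real.exp_log (zero_lt_one.trans hL), closedOrbitCount_eq_sum]
  refine tendsto_mul_inv_pow_mul_sum_Icc hL ((tendsto_ncard_minimalPeriod_shift_div hκ).congr' ?_)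
  filter_upwards [eventually_gt_atTop 0] with d hd
  field_simp
end

section
/- Endow Σ_A^+ with the topology induced from the product topology on (Fin κ₀)^ℕ (equivalently, the topology of the metric d_θ for any θ ∈ (0,1)). Then Σ_A^+ is a compact space, σ is continuous, and the topological entropy of σ : Σ_A^+ → Σ_A^+ (the cover entropy with respect to the uniformity of this compact space) equals log(κ₀ − 1). -/
/-- The discrete uniformity on the finite alphabet `Fin κ₀`; it induces the discrete
topology, so the product uniformity on `ℕ → Fin κ₀` induces the product topology. -/
instance (κ₀ : ℕ) : UniformSpace (Fin κ₀) := ⊥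

/-!
Recording the first symbol of `ξ` and its increments `ξ (j + 1) - ξ j`, which range over the
`κ₀ - 1` nonzero residues mod `κ₀`, identifies `Σ_A^+` with `Fin κ₀ × (ℤ/κ₀ ∖ {0})^ℕ`.
Two points are related by the `(n + 1)`-step dynamical refinement of "agree on the first
`m + 1` symbols" iff they agree on the first `m + n + 1` symbols, i.e. iff their first `m + n`
codes agree. So a minimal cover has exactly `κ₀ (κ₀ - 1) ^ (m + n)` elements, whose exponential
growth rate is `log (κ₀ - 1)`, and these cylinder entourages form a basis of the uniformity.
-/

open Filter Set Uniformity Dynamics ExpGrowth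
open scoped ENNReal

theorem Dynamics.coverMincard_univ_eq_card_of_surjective {X β : Type*} [Fintype β] {T : X → X}
    {U : SetRel X X} {n : ℕ} {f : X → β} (hf : Function.Surjective f)
    (hU : dynEntourage T U n = {p | f p.1 = f p.2}) :
    coverMincard T univ U n = Fintype.card β := by
  classical
  obtain ⟨g, hg⟩ := hf.hasRightInverse
  apply le_antisymm
  · have hcover : IsDynCoverOf T univ U n (Finset.univ.image g) := fun x _ =>
      ⟨g (f x), by simp, show (x, g (f x)) ∈ _ by rw [hU]; exact (hg (f x)).symm⟩
    exact hcover.coverMincard_le_card.trans (by exact_mod_cast Finset.card_image_le)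
  · refine le_iInf₂ fun s hs => ?_
    have himage : s.image f = Finset.univ := Finset.eq_univ_of_forall fun b => by
      obtain ⟨x, hx, hgx⟩ := hs (mem_univ (g b))
      have hfx : f (g b) = f x := by rw [hU] at hgx; exact hgx
      exact Finset.mem_image.2 ⟨x, hx, hfx ▸ hg b⟩
    exact_mod_cast himage ▸ Finset.card_image_le

theorem hasBasis_uniformity_nat_pi_of_discrete {α : Type*} [UniformSpace α]
    [DiscreteUniformity α] :
    (𝓤 (ℕ → α)).HasBasis (fun _ => True) fun m => {p | ∀ i < m, p.1 i = p.2 i} := by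
  have hpi : 𝓤 (ℕ → α) = ⨅ i, 𝓟 {p : (ℕ → α) × (ℕ → α) | p.1 i = p.2 i} := by
    simp only [Pi.uniformity, DiscreteUniformity.eq_principal_setRelId, comap_principal]
    rfl
  rw [hpi]
  refine (hasBasis_iInf_principal_finite _).to_hasBasis (fun t ht => ?_) fun m _ =>
    ⟨Set.Iio m, Set.finite_Iio m, fun p hp i hi => mem_iInter₂.1 hp i hi⟩
  obtain ⟨N, hN⟩ := ht.bddAbove
  exact ⟨N + 1, trivial, fun p hp => mem_iInter₂.2 fun i hi => hp i (Nat.lt_succ_of_le (hN hi))⟩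

namespace SigmaPlus

variable {κ₀ : ℕ}

lemma isClosed_setOf_admissible : IsClosed {ξ : ℕ → Fin κ₀ | ∀ j, ξ j ≠ ξ (j + 1)} := by
  simp only [ofPred_forall]
  exact isClosed_iInter fun j =>
    (isClosed_discrete {p : Fin κ₀ × Fin κ₀ | p.1 ≠ p.2}).preimage
      (f := fun ξ : ℕ → Fin κ₀ => (ξ j, ξ (j + 1))) (by fun_prop)

lemma continuous_shift : Continuous (shift κ₀) :=
  continuous_induced_rng.2 <|
    continuous_pi fun j => (continuous_apply (j + 1)).comp continuous_subtype_val

lemma iterate_shift_apply (k : ℕ) (ξ : SigmaPlus κ₀) (j : ℕ) :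
    ((shift κ₀)^[k] ξ).1 j = ξ.1 (j + k) := by
  induction k generalizing ξ with
  | zero => rfl
  | succ k ih => rw [Function.iterate_succ_apply, ih]; rfl

def cylinderEntourage (κ₀ m : ℕ) : SetRel (SigmaPlus κ₀) (SigmaPlus κ₀) :=
  {p | ∀ i < m, p.1.1 i = p.2.1 i}

lemma cylinderEntourage_antitone : Antitone (cylinderEntourage κ₀) :=
  fun _ _ hmn _ hp i hi => hp i (hi.trans_le hmn)

lemma hasBasis_uniformity : (𝓤 (SigmaPlus κ₀)).HasBasis (fun _ => True) (cylinderEntourage κ₀) := by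
  rw [uniformity_subtype]
  exact hasBasis_uniformity_nat_pi_of_discrete.comap _

lemma dynEntourage_shift_cylinderEntourage (m n : ℕ) :
    dynEntourage (shift κ₀) (cylinderEntourage κ₀ (m + 1)) (n + 1) =
      cylinderEntourage κ₀ (m + n + 1) := by
  ext ⟨ξ, η⟩
  simp only [mem_dynEntourage, cylinderEntourage, mem_ofPred_eq, iterate_shift_apply]
  constructor
  · intro h j hj
    rcases le_or_gt j n with hjn | hjn
    · simpa using h j (by omega) 0 (by omega)
    · simpa [Nat.sub_add_cancel hjn.le] using h n (by omega) (j - n) (by omega)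
  · exact fun h k hk i hi => h (i + k) (by omega)

variable [NeZero κ₀]

def encode (L : ℕ) (ξ : SigmaPlus κ₀) : Fin κ₀ × (Fin L → {c : Fin κ₀ // c ≠ 0}) :=
  (ξ.1 0, fun j => ⟨ξ.1 (j + 1) - ξ.1 j, sub_ne_zero.2 (ξ.2 j).symm⟩)

lemma encode_eq_encode_iff {L : ℕ} {ξ η : SigmaPlus κ₀} :
    encode L ξ = encode L η ↔ (ξ, η) ∈ cylinderEntourage κ₀ (L + 1) := by
  simp only [encode, Prod.mk.injEq, funext_iff, Subtype.mk.injEq, cylinderEntourage,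
    mem_ofPred_eq]
  constructor
  · rintro ⟨h0, hstep⟩ i hi
    induction i with
    | zero => exact h0
    | succ i ih =>
      rw [← sub_add_cancel (ξ.1 (i + 1)) (ξ.1 i), ← sub_add_cancel (η.1 (i + 1)) (η.1 i),
        hstep ⟨i, by omega⟩, ih (by omega)]
  · intro h
    exact ⟨h 0 (by omega), fun j => by rw [h j (by omega), h (j + 1) (by omega)]⟩

def ofIncrements (a : Fin κ₀) (v : ℕ → {c : Fin κ₀ // c ≠ 0}) : SigmaPlus κ₀ :=
  ⟨fun j => a + ∑ i ∈ Finset.range j, (v i : Fin κ₀), fun j => by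
    dsimp only
    rw [Finset.sum_range_succ, ← add_assoc]
    exact left_ne_add.2 (v j).2⟩

lemma encode_ofIncrements (L : ℕ) (a : Fin κ₀) (v : ℕ → {c : Fin κ₀ // c ≠ 0}) :
    encode L (ofIncrements a v) = (a, fun j : Fin L => v j) := by
  ext <;> simp [encode, ofIncrements, Finset.sum_range_succ]

lemma encode_surjective [Nontrivial (Fin κ₀)] (L : ℕ) :
    Function.Surjective (encode (κ₀ := κ₀) L) := by
  rintro ⟨a, w⟩
  obtain ⟨c, hc⟩ := exists_ne (0 : Fin κ₀)
  refine ⟨ofIncrements a fun j => if h : j < L then w ⟨j, h⟩ else ⟨c, hc⟩, ?_⟩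
  simp [encode_ofIncrements]

lemma coverMincard_shift_cylinderEntourage [Nontrivial (Fin κ₀)] (m n : ℕ) :
    coverMincard (shift κ₀) univ (cylinderEntourage κ₀ (m + 1)) (n + 1) =
      κ₀ * (κ₀ - 1) ^ (m + n) := by
  rw [coverMincard_univ_eq_card_of_surjective (encode_surjective (m + n))]
  · simp
  · rw [dynEntourage_shift_cylinderEntourage]
    ext p
    exact encode_eq_encode_iff.symm

lemma coverEntropyEntourage_shift_cylinderEntourage [Nontrivial (Fin κ₀)] (m : ℕ) :
    coverEntropyEntourage (shift κ₀) univ (cylinderEntourage κ₀ (m + 1)) =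
      Real.log ((κ₀ : ℝ) - 1) := by
  have hκ : 2 ≤ κ₀ := Fin.nontrivial_iff_two_le.1 inferInstance
  have hcard (n : ℕ) :
      (coverMincard (shift κ₀) univ (cylinderEntourage κ₀ (m + 1)) (n + 1) : ℝ≥0∞) =
        ((κ₀ * (κ₀ - 1) ^ (m + n) : ℕ) : ℝ≥0∞) := by
    rw [coverMincard_shift_cylinderEntourage]; rfl
  have hlog : ENNReal.log ((κ₀ - 1 : ℕ) : ℝ≥0∞) = Real.log ((κ₀ : ℝ) - 1) := by
    rw [← ENNReal.ofReal_natCast, ENNReal.log_ofReal_of_pos (Nat.cast_pos.2 (by omega)),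
      Nat.cast_sub (by omega), Nat.cast_one]
  rw [coverEntropyEntourage, ← hlog, ← expGrowthSup_pow]
  apply le_antisymm
  · refine expGrowthSup_le_of_eventually_le (b := ((κ₀ * (κ₀ - 1) ^ m : ℕ) : ℝ≥0∞))
      (ENNReal.natCast_ne_top _) ?_
    filter_upwards [eventually_ge_atTop 1] with n hn
    obtain ⟨k, rfl⟩ := Nat.exists_eq_add_of_le' hn
    have hle : κ₀ * (κ₀ - 1) ^ (m + k) ≤ κ₀ * (κ₀ - 1) ^ m * (κ₀ - 1) ^ (k + 1) := by
      rw [mul_assoc, ← pow_add]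
      exact Nat.mul_le_mul_left κ₀ (Nat.pow_le_pow_right (by omega) (by omega))
    rw [hcard]
    exact_mod_cast hle
  · refine expGrowthSup_of_eventually_ge (b := 1) one_ne_zero ?_
    filter_upwards [eventually_ge_atTop 1] with n hn
    obtain ⟨k, rfl⟩ := Nat.exists_eq_add_of_le' hn
    have hle : (κ₀ - 1) ^ (k + 1) ≤ κ₀ * (κ₀ - 1) ^ (m + k) := by
      rw [pow_succ, mul_comm]
      exact Nat.mul_le_mul (by omega) (Nat.pow_le_pow_right (by omega) (by omega))
    rw [hcard, one_mul]
    exact_mod_cast hle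

end SigmaPlus

open SigmaPlus in
/-- `Σ_A^+` is compact, the shift `σ` is continuous, and the topological (cover)
entropy of `σ : Σ_A^+ → Σ_A^+` equals `log (κ₀ - 1)`. -/
theorem shift_compact_continuous_entropy (κ₀ : ℕ) (hκ : 3 ≤ κ₀) :
    CompactSpace (SigmaPlus κ₀) ∧
    Continuous (shift κ₀) ∧
    Dynamics.coverEntropy (shift κ₀) (Set.univ : Set (SigmaPlus κ₀)) =
      ((Real.log ((κ₀ : ℝ) - 1) : ℝ) : EReal) := by
  have : NeZero κ₀ := ⟨by omega⟩
  have : Nontrivial (Fin κ₀) := Fin.nontrivial_iff_two_le.2 (by omega)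
  refine ⟨isCompact_iff_compactSpace.1 isClosed_setOf_admissible.isCompact, continuous_shift, ?_⟩
  rw [coverEntropy_eq_iSup_basis hasBasis_uniformity]
  refine le_antisymm (iSup₂_le fun m _ => ?_)
    (le_iSup₂_of_le 1 trivial (coverEntropyEntourage_shift_cylinderEntourage 0).ge)
  exact (coverEntropyEntourage_antitone _ _ (cylinderEntourage_antitone m.le_succ)).trans
    (coverEntropyEntourage_shift_cylinderEntourage m).le
end

section
/- Let f : Σ_A^+ → ℝ, set h₀ = log(κ₀ − 1), and define F(x,y) = f(x) − f(y) on Σ_A^+ × Σ_A^+ with the product shift σ̄(x,y) = (σx,σy) and associated Ruelle operator L̄. Suppose there exist C > 0 and ρ₁ ∈ (0,1) such that for every real t with |t| ≥ e, every integer p ≥ 0 and every integer l with 0 ≤ l ≤ ⌊log|t|⌋ − 1, one has ‖L_{itf − h₀}^{p⌊log|t|⌋ + l} 1‖_∞ ≤ C^{1/2}·ρ₁^{p⌊log|t|⌋}, where ‖·‖_∞ is the supremum norm. Then there exist C' > 0, ρ ∈ (0,1) and α > 0 such that for every t with |t| ≥ e and every n ≥ 1: ‖L̄_{itF}^n 1‖_∞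 ≤ C'·e^{2h₀ n}·min(ρ^n |t|^α, 1). -/
/-- The product shift `σ̄(x,y) = (σ x, σ y)` on `Σ_A^+ × Σ_A^+`. -/
def prodShift (κ₀ : ℕ) : SigmaPlus κ₀ × SigmaPlus κ₀ → SigmaPlus κ₀ × SigmaPlus κ₀ :=
  fun p => (shift κ₀ p.1, shift κ₀ p.2)

/-- The Ruelle transfer operator of a potential `ψ` for a map `T`:
`(L_ψ u)(x) = Σ_{y : T y = x} e^{ψ(y)} u(y)` (a finite sum over the fiber). -/
noncomputable def RuelleOp {X : Type*} (T : X → X) (ψ : X → ℂ) (u : X → ℂ) : X → ℂ :=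
  fun x => ∑ᶠ y ∈ {y : X | T y = x}, Complex.exp (ψ y) * u y


/-!
Since `F(x, y) = f(x) - f(y)` splits over the two coordinates, the product operator factors:
`L̄_{itF}^n 1 (x, y) = e^{2 h₀ n} · L_{itf - h₀}^n 1 (x) · L_{-itf - h₀}^n 1 (y)`. Writing
`n = p⌊log|t|⌋ + l`, the hypothesis (applied at `t` and `-t`) bounds each factor by `√C ρ₁^{p⌊log|t|⌋}`,
and `ρ₁^{2p⌊log|t|⌋} ≤ min(ρ^n |t|^α, 1)` for `ρ = ρ₁²` and `α = -log ρ`, because the missing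
`ρ^l` is compensated by `|t|^α ≥ ρ^{-l}` as long as `l ≤ log|t|`.
-/

namespace RuelleOp

variable {X Y : Type*} {T : X → X} {S : Y → Y}

theorem apply_eq_sum (hT : ∀ x, {y | T y = x}.Finite) (ψ u : X → ℂ) (x : X) :
    RuelleOp T ψ u x = ∑ y ∈ (hT x).toFinset, Complex.exp (ψ y) * u y :=
  finsum_mem_eq_finite_toFinset_sum _ (hT x)

theorem const_mul (ψ u : X → ℂ) (a : ℂ) (x : X) :
    RuelleOp T ψ (fun y => a * u y) x = a * RuelleOp T ψ u x := by
  simp only [RuelleOp, mul_finsum_mem, mul_left_comm]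

theorem add_const (ψ u : X → ℂ) (c : ℂ) (x : X) :
    RuelleOp T (fun y => ψ y + c) u x = Complex.exp c * RuelleOp T ψ u x := by
  simp only [RuelleOp, mul_finsum_mem, Complex.exp_add, mul_assoc, mul_left_comm]

theorem iterate_add_const (ψ u : X → ℂ) (c : ℂ) (n : ℕ) :
    (RuelleOp T (fun y => ψ y + c))^[n] u =
      fun x => Complex.exp c ^ n * (RuelleOp T ψ)^[n] u x := by
  induction n with
  | zero => simp
  | succ n ih =>
    funext x
    rw [Function.iterate_succ_apply', Function.iterate_succ_apply', ih, add_const, const_mul,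
      pow_succ']
    ring

theorem prodMap (hT : ∀ x, {x' | T x' = x}.Finite) (hS : ∀ y, {y' | S y' = y}.Finite)
    (ψ u : X → ℂ) (φ v : Y → ℂ) (x : X) (y : Y) :
    RuelleOp (Prod.map T S) (fun q => ψ q.1 + φ q.2) (fun q => u q.1 * v q.2) (x, y) =
      RuelleOp T ψ u x * RuelleOp S φ v y := by
  have hfiber : {q | Prod.map T S q = (x, y)} = {x' | T x' = x} ×ˢ {y' | S y' = y} := by
    ext ⟨a, b⟩
    simp [Prod.ext_iff]
  rw [RuelleOp, hfiber, finsum_mem_eq_finite_toFinset_sum _ ((hT x).prod (hS y)),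
    ← Set.Finite.toFinset_prod (hT x) (hS y), Finset.sum_product, apply_eq_sum hT, apply_eq_sum hS,
    Finset.sum_mul_sum]
  refine Finset.sum_congr rfl fun a _ => Finset.sum_congr rfl fun b _ => ?_
  rw [Complex.exp_add]
  ring

theorem iterate_prodMap (hT : ∀ x, {x' | T x' = x}.Finite) (hS : ∀ y, {y' | S y' = y}.Finite)
    (ψ u : X → ℂ) (φ v : Y → ℂ) (n : ℕ) :
    (RuelleOp (Prod.map T S) (fun q => ψ q.1 + φ q.2))^[n] (fun q => u q.1 * v q.2) =
      fun q => (RuelleOp T ψ)^[n] u q.1 * (RuelleOp S φ)^[n] v q.2 := by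
  induction n with
  | zero => rfl
  | succ n ih =>
    funext q
    rw [Function.iterate_succ_apply', Function.iterate_succ_apply',
      Function.iterate_succ_apply', ih, ← prodMap hT hS]

theorem norm_apply_le (hT : ∀ x, {y | T y = x}.Finite) {K : ℕ}
    (hK : ∀ x, {y | T y = x}.ncard ≤ K) {ψ u : X → ℂ} {b M : ℝ} (hψ : ∀ y, (ψ y).re ≤ b)
    (hM : 0 ≤ M) (hu : ∀ y, ‖u y‖ ≤ M) (x : X) :
    ‖RuelleOp T ψ u x‖ ≤ K * Real.exp b * M := by
  rw [apply_eq_sum hT]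
  calc ‖∑ y ∈ (hT x).toFinset, Complex.exp (ψ y) * u y‖
      ≤ ∑ y ∈ (hT x).toFinset, ‖Complex.exp (ψ y) * u y‖ := norm_sum_le _ _
    _ ≤ ∑ _y ∈ (hT x).toFinset, Real.exp b * M := by
        refine Finset.sum_le_sum fun y _ => ?_
        rw [norm_mul, Complex.norm_exp]
        exact mul_le_mul (Real.exp_le_exp.2 (hψ y)) (hu y) (norm_nonneg _) (Real.exp_pos b).le
    _ = {y | T y = x}.ncard * (Real.exp b * M) := by
        rw [Finset.sum_const, nsmul_eq_mul, Set.ncard_eq_toFinset_card _ (hT x)]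
    _ ≤ K * Real.exp b * M := by
        rw [mul_assoc]
        exact mul_le_mul_of_nonneg_right (by exact_mod_cast hK x) (by positivity)

theorem norm_iterate_one_le (hT : ∀ x, {y | T y = x}.Finite) {K : ℕ}
    (hK : ∀ x, {y | T y = x}.ncard ≤ K) {ψ : X → ℂ} {b : ℝ} (hψ : ∀ y, (ψ y).re ≤ b)
    (n : ℕ) (x : X) :
    ‖(RuelleOp T ψ)^[n] (fun _ => 1) x‖ ≤ (K * Real.exp b) ^ n := by
  induction n generalizing x with
  | zero => simp
  | succ n ih =>
    rw [Function.iterate_succ_apply', pow_succ']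
    exact norm_apply_le hT hK hψ (by positivity) ih x

theorem bddAbove_range_norm_iterate_one (hT : ∀ x, {y | T y = x}.Finite) {K : ℕ}
    (hK : ∀ x, {y | T y = x}.ncard ≤ K) {ψ : X → ℂ} {b : ℝ} (hψ : ∀ y, (ψ y).re ≤ b) (n : ℕ) :
    BddAbove (Set.range fun x => ‖(RuelleOp T ψ)^[n] (fun _ => 1) x‖) :=
  ⟨_, Set.forall_mem_range.2 (norm_iterate_one_le hT hK hψ n)⟩

end RuelleOp

section Shift

variable {κ₀ : ℕ}

theorem shift_fiber_injOn (ξ : SigmaPlus κ₀) :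
    Set.InjOn (fun η : SigmaPlus κ₀ => η.1 0) {η | shift κ₀ η = ξ} := by
  rintro η rfl η' hη' h0
  apply Subtype.ext
  funext j
  cases j with
  | zero => exact h0
  | succ j => exact congrArg (fun ζ : SigmaPlus κ₀ => ζ.1 j) hη'.symm

theorem shift_fiber_finite (ξ : SigmaPlus κ₀) : {η | shift κ₀ η = ξ}.Finite :=
  Set.Finite.of_finite_image (Set.toFinite _) (shift_fiber_injOn ξ)

theorem shift_fiber_ncard_le (ξ : SigmaPlus κ₀) : {η | shift κ₀ η = ξ}.ncard ≤ κ₀ := by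
  simpa using Set.ncard_le_ncard_of_injOn _ (fun η _ => Set.mem_univ _) (shift_fiber_injOn ξ)

theorem prodShift_iterate_one (ψ φ : SigmaPlus κ₀ → ℂ) (c : ℂ) (n : ℕ) (x y : SigmaPlus κ₀) :
    (RuelleOp (prodShift κ₀) (fun q => ψ q.1 + φ q.2 + c))^[n] (fun _ => 1) (x, y) =
      Complex.exp c ^ n * ((RuelleOp (shift κ₀) ψ)^[n] (fun _ => 1) x *
        (RuelleOp (shift κ₀) φ)^[n] (fun _ => 1) y) := by
  have hprod := RuelleOp.iterate_prodMap shift_fiber_finite shift_fiber_finite ψ (fun _ => 1)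
    φ (fun _ => 1) n
  simp only [mul_one] at hprod
  rw [show prodShift κ₀ = Prod.map (shift κ₀) (shift κ₀) from rfl,
    RuelleOp.iterate_add_const (T := Prod.map (shift κ₀) (shift κ₀)) (fun q => ψ q.1 + φ q.2),
    hprod]

theorem norm_prodShift_iterate_one_le {ψ φ : SigmaPlus κ₀ → ℂ} {n : ℕ} {B : ℝ}
    (hψ : ∀ x, ‖(RuelleOp (shift κ₀) ψ)^[n] (fun _ => 1) x‖ ≤ B)
    (hφ : ∀ y, ‖(RuelleOp (shift κ₀) φ)^[n] (fun _ => 1) y‖ ≤ B) (c : ℝ)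
    (q : SigmaPlus κ₀ × SigmaPlus κ₀) :
    ‖(RuelleOp (prodShift κ₀) (fun q => ψ q.1 + φ q.2 + c))^[n] (fun _ => 1) q‖ ≤
      Real.exp (c * n) * B ^ 2 := by
  obtain ⟨x, y⟩ := q
  rw [prodShift_iterate_one, norm_mul, norm_mul, norm_pow, Complex.norm_exp, Complex.ofReal_re,
    ← Real.exp_nat_mul, mul_comm (n : ℝ), sq]
  exact mul_le_mul_of_nonneg_left
    (mul_le_mul (hψ x) (hφ y) (norm_nonneg _) ((norm_nonneg _).trans (hψ x))) (Real.exp_pos _).le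

end Shift

theorem one_le_pow_mul_rpow_neg_log {ρ T : ℝ} (hρ0 : 0 < ρ) (hρ1 : ρ ≤ 1) (hT : 0 < T) {l : ℕ}
    (hl : l ≤ Real.log T) : 1 ≤ ρ ^ l * T ^ (-Real.log ρ) := by
  rw [← Real.rpow_natCast, Real.rpow_def_of_pos hρ0, Real.rpow_def_of_pos hT, ← Real.exp_add]
  refine Real.one_le_exp ?_
  nlinarith [Real.log_nonpos hρ0.le hρ1]

theorem pow_le_min_pow_add_mul_rpow {ρ T : ℝ} (hρ0 : 0 < ρ) (hρ1 : ρ ≤ 1) (hT : 0 < T)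
    (m : ℕ) {l : ℕ} (hl : l ≤ Real.log T) :
    ρ ^ m ≤ min (ρ ^ (m + l) * T ^ (-Real.log ρ)) 1 := by
  refine le_min ?_ (pow_le_one₀ hρ0.le hρ1)
  calc ρ ^ m ≤ ρ ^ m * (ρ ^ l * T ^ (-Real.log ρ)) :=
        le_mul_of_one_le_right (by positivity) (one_le_pow_mul_rpow_neg_log hρ0 hρ1 hT hl)
    _ = ρ ^ (m + l) * T ^ (-Real.log ρ) := by rw [pow_add]; ring

theorem dolgopyat_product_estimate_general (κ₀ : ℕ)
    (f : SigmaPlus κ₀ → ℝ)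
    (C : ℝ) (hC : 0 < C) (ρ₁ : ℝ) (hρ₁ : ρ₁ ∈ Set.Ioo (0 : ℝ) 1)
    (hyp : ∀ t : ℝ, Real.exp 1 ≤ |t| → ∀ p l : ℕ,
      l ≤ ⌊Real.log |t|⌋₊ - 1 →
      (⨆ ξ : SigmaPlus κ₀,
        ‖((RuelleOp (shift κ₀)
          (fun η => Complex.I * t * (f η : ℂ) - (Real.log ((κ₀ : ℝ) - 1) : ℂ)))^[
            p * ⌊Real.log |t|⌋₊ + l] (fun _ => (1 : ℂ)) ξ)‖) ≤
        Real.sqrt C * ρ₁ ^ (p * ⌊Real.log |t|⌋₊)) :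
    ∃ C' : ℝ, 0 < C' ∧ ∃ ρ ∈ Set.Ioo (0 : ℝ) 1, ∃ α : ℝ, 0 < α ∧
      ∀ t : ℝ, Real.exp 1 ≤ |t| → ∀ n : ℕ, 1 ≤ n →
        (⨆ p : SigmaPlus κ₀ × SigmaPlus κ₀,
          ‖((RuelleOp (prodShift κ₀)
            (fun q => Complex.I * t * ((f q.1 : ℂ) - (f q.2 : ℂ))))^[n]
            (fun _ => (1 : ℂ)) p)‖) ≤
          C' * Real.exp (2 * Real.log ((κ₀ : ℝ) - 1) * n) *
            min (ρ ^ n * |t| ^ α) 1 := by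
  set h₀ := Real.log ((κ₀ : ℝ) - 1)
  have hρ : ρ₁ ^ 2 ∈ Set.Ioo (0 : ℝ) 1 := ⟨pow_pos hρ₁.1 2, pow_lt_one₀ hρ₁.1.le hρ₁.2 two_ne_zero⟩
  refine ⟨C, hC, ρ₁ ^ 2, hρ, -Real.log (ρ₁ ^ 2), neg_pos.2 (Real.log_neg hρ.1 hρ.2), ?_⟩
  intro t ht n _
  have ht0 : 0 < |t| := (Real.exp_pos 1).trans_le ht
  have hlog : 1 ≤ Real.log |t| := (Real.le_log_iff_exp_le ht0).2 ht
  set N := ⌊Real.log |t|⌋₊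
  have hN : 1 ≤ N := Nat.le_floor (by exact_mod_cast hlog)
  obtain ⟨p, l, rfl, hl⟩ : ∃ p l, n = p * N + l ∧ l ≤ N - 1 :=
    ⟨n / N, n % N, by rw [mul_comm, Nat.div_add_mod], by have := Nat.mod_lt n hN; omega⟩
  have hfactor : ∀ s : ℝ, |s| = |t| → ∀ ξ, ‖(RuelleOp (shift κ₀)
      (fun η => Complex.I * s * (f η : ℂ) - (h₀ : ℂ)))^[p * N + l] (fun _ => 1) ξ‖ ≤
        √C * ρ₁ ^ (p * N) := by
    intro s hs ξ
    have hsup := hyp s (by rwa [hs]) p l (by rwa [hs])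
    rw [hs] at hsup
    exact (le_ciSup (RuelleOp.bddAbove_range_norm_iterate_one shift_fiber_finite
      shift_fiber_ncard_le (b := -h₀) (fun η => by simp) _) ξ).trans hsup
  have hpot : (fun q : SigmaPlus κ₀ × SigmaPlus κ₀ => Complex.I * t * ((f q.1 : ℂ) - f q.2)) =
      fun q => (Complex.I * t * (f q.1 : ℂ) - h₀) + (Complex.I * (-t : ℝ) * (f q.2 : ℂ) - h₀) +
        ((2 * h₀ : ℝ) : ℂ) := by
    funext q; push_cast; ring
  refine Real.iSup_le (fun q => ?_) (by positivity)
  calc _ ≤ Real.exp (2 * h₀ * ↑(p * N + l)) * (√C * ρ₁ ^ (p * N)) ^ 2 := by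
        rw [hpot]
        exact norm_prodShift_iterate_one_le (hfactor t rfl) (hfactor (-t) (abs_neg t)) _ q
    _ = C * Real.exp (2 * h₀ * ↑(p * N + l)) * (ρ₁ ^ 2) ^ (p * N) := by
        rw [mul_pow, Real.sq_sqrt hC.le, ← pow_mul, ← pow_mul, mul_comm 2 (p * N)]
        ring
    _ ≤ C * Real.exp (2 * h₀ * ↑(p * N + l)) *
          min ((ρ₁ ^ 2) ^ (p * N + l) * |t| ^ (-Real.log (ρ₁ ^ 2))) 1 := by
        gcongr
        exact pow_le_min_pow_add_mul_rpow hρ.1 hρ.2.le ht0 _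
          ((Nat.cast_le.2 (by omega : l ≤ N)).trans (Nat.floor_le (by linarith)))

/-- Dolgopyat-type estimates for `L_{itf - h₀}` imply the bound
`‖L̄_{itF}^n 1‖_∞ ≤ C'·e^{2 h₀ n}·min(ρ^n |t|^α, 1)` for the Ruelle operator of
`F(x,y) = f(x) - f(y)` on the product shift space, where `h₀ = log (κ₀ - 1)`. -/
theorem dolgopyat_product_estimate (κ₀ : ℕ) (hκ : 3 ≤ κ₀)
    (f : SigmaPlus κ₀ → ℝ)
    (C : ℝ) (hC : 0 < C) (ρ₁ : ℝ) (hρ₁ : ρ₁ ∈ Set.Ioo (0 : ℝ) 1)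
    (hyp : ∀ t : ℝ, Real.exp 1 ≤ |t| → ∀ p l : ℕ,
      l ≤ ⌊Real.log |t|⌋₊ - 1 →
      (⨆ ξ : SigmaPlus κ₀,
        ‖((RuelleOp (shift κ₀)
          (fun η => Complex.I * t * (f η : ℂ) - (Real.log ((κ₀ : ℝ) - 1) : ℂ)))^[
            p * ⌊Real.log |t|⌋₊ + l] (fun _ => (1 : ℂ)) ξ)‖) ≤
        Real.sqrt C * ρ₁ ^ (p * ⌊Real.log |t|⌋₊)) :
    ∃ C' : ℝ, 0 < C' ∧ ∃ ρ ∈ Set.Ioo (0 : ℝ) 1, ∃ α : ℝ, 0 < α ∧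
      ∀ t : ℝ, Real.exp 1 ≤ |t| → ∀ n : ℕ, 1 ≤ n →
        (⨆ p : SigmaPlus κ₀ × SigmaPlus κ₀,
          ‖((RuelleOp (prodShift κ₀)
            (fun q => Complex.I * t * ((f q.1 : ℂ) - (f q.2 : ℂ))))^[n]
            (fun _ => (1 : ℂ)) p)‖) ≤
          C' * Real.exp (2 * Real.log ((κ₀ : ℝ) - 1) * n) *
            min (ρ ^ n * |t| ^ α) 1 :=
  dolgopyat_product_estimate_general κ₀ f C hC ρ₁ hρ₁ hyp
end
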